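/- arXiv:1301.5580 — 3 statements merged into one kernel-verified Lean document; each statement's English description precedes it below -/
import Mathlib

section
/- For every real (or complex) α and |x| < 1/e, one has (W(x)/x)^α = ∑_{n≥0} (α(n+α)^{n-1}/n!)(-x)^n, where W is the principal branch of the Lambert W function. -/
/-!
Put `a₀(α) = 1` and `aₙ(α) = α (n + α)^(n-1) / n!`. Abel's identity
`∑_{i+j=n} aᵢ(α) aⱼ(β) = aₙ(α + β)` makes `α ↦ G(α) = ∑ aₙ(α) yⁿ` a continuous homomorphism from
`(ℝ, +)` to `(ℝ_{>0}, ·)` when `e |y| < 1`, so `G(α) = G(1)^α`; and for `y = -x` the series `G(1)`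
is the defining series of `W(x)/x`.

Abel's identity follows from its Hurwitz form `∑_{i+j=n} aᵢ(x) (y + j)^j / j! = (x + y + n)^n / n!`,
proved by induction on `n`: in `y`, both sides have as derivative the case `n - 1` at `y + 1`, and
both vanish at `y = -x - n`, where the left side is an `n`-th forward difference of a polynomial of
degree `n - 1`.
-/

/-- The principal branch of the (real) Lambert W function, defined by its power series
`W(z) = -∑_{n ≥ 1} (n^{n-1}/n!) (-z)^n` (here indexed by `n = m+1`, `m : ℕ`). -/
noncomputable def lambertW (z : ℝ) : ℝ :=
  -∑' m : ℕ, (((m + 1 : ℕ) : ℝ) ^ m / (Nat.factorial (m + 1) : ℝ)) * (-z) ^ (m + 1)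

open Finset Real
open scoped Nat

lemma eq_of_hasDerivAt_eq {f g f' : ℝ → ℝ} (hf : ∀ x, HasDerivAt f (f' x) x)
    (hg : ∀ x, HasDerivAt g (f' x) x) (a : ℝ) (ha : f a = g a) : f = g :=
  eq_of_fderiv_eq (𝕜 := ℝ) (fun x => (hf x).differentiableAt) (fun x => (hg x).differentiableAt)
    (fun x => by rw [(hf x).hasFDerivAt.fderiv, (hg x).hasFDerivAt.fderiv]) a ha

lemma pos_of_map_add_eq_mul {f : ℝ → ℝ} (h0 : f 0 = 1)
    (hadd : ∀ a b, f (a + b) = f a * f b) (a : ℝ) : 0 < f a := by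
  have hsq : f a = f (a / 2) ^ 2 := by rw [sq, ← hadd, add_halves]
  have hne : f a ≠ 0 := fun h => by
    have := hadd a (-a)
    rw [add_neg_cancel, h0, h, zero_mul] at this
    exact one_ne_zero this
  exact lt_of_le_of_ne (hsq ▸ sq_nonneg _) (Ne.symm hne)

lemma eq_rpow_of_continuous_of_map_add_eq_mul {f : ℝ → ℝ} (hf : Continuous f) (h0 : f 0 = 1)
    (hadd : ∀ a b, f (a + b) = f a * f b) (a : ℝ) : f a = f 1 ^ a := by
  have hpos := pos_of_map_add_eq_mul h0 hadd
  let logf : ℝ →+ ℝ := AddMonoidHom.mk' (fun a => log (f a)) fun a b => by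
    simp only [hadd, log_mul (hpos a).ne' (hpos b).ne']
  have hlin := map_real_smul logf (hf.log fun a => (hpos a).ne') a 1
  simp only [smul_eq_mul, mul_one] at hlin
  change log (f a) = a * log (f 1) at hlin
  rw [rpow_def_of_pos (hpos 1), mul_comm, ← hlin]
  exact (exp_log (hpos a)).symm

noncomputable def abelCoeff (α : ℝ) (n : ℕ) : ℝ :=
  if n = 0 then 1 else α * ((n : ℝ) + α) ^ (n - 1) / (n ! : ℝ)

noncomputable def shiftedPowCoeff (y : ℝ) (n : ℕ) : ℝ :=
  (y + n) ^ n / (n ! : ℝ)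

@[simp]
lemma shiftedPowCoeff_zero (y : ℝ) : shiftedPowCoeff y 0 = 1 := by
  simp [shiftedPowCoeff]

@[simp]
lemma abelCoeff_zero (α : ℝ) : abelCoeff α 0 = 1 := rfl

lemma abelCoeff_succ (α : ℝ) (n : ℕ) :
    abelCoeff α (n + 1) = α * (α + (n + 1 : ℕ)) ^ n / ((n + 1) ! : ℝ) := by
  simp [abelCoeff, add_comm]

lemma abelCoeff_succ_eq_sub (y : ℝ) (n : ℕ) :
    abelCoeff y (n + 1) = shiftedPowCoeff y (n + 1) - shiftedPowCoeff (y + 1) n := by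
  rw [abelCoeff_succ, shiftedPowCoeff, shiftedPowCoeff, Nat.factorial_succ]
  push_cast
  field_simp
  ring

lemma hasDerivAt_shiftedPowCoeff_succ (y : ℝ) (n : ℕ) :
    HasDerivAt (shiftedPowCoeff · (n + 1)) (shiftedPowCoeff (y + 1) n) y := by
  unfold shiftedPowCoeff
  refine ((((hasDerivAt_id y).add_const _).pow (n + 1)).div_const _).congr_deriv ?_
  rw [Nat.factorial_succ, id]
  push_cast
  field_simp
  ring

lemma abelCoeff_mul_factorial_mul_pow (x : ℝ) {i j n : ℕ} (h : i + j = n + 1) :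
    abelCoeff x i * i ! * (x + i) ^ j = x * (x + i) ^ n := by
  cases i with
  | zero =>
    obtain rfl : j = n + 1 := by simpa using h
    simp [pow_succ']
  | succ i =>
    rw [abelCoeff_succ, div_mul_cancel₀ _ (by positivity), mul_assoc, ← pow_add]
    congr 2
    omega

lemma sum_antidiagonal_abelCoeff_mul_neg_pow (x : ℝ) (n : ℕ) :
    ∑ p ∈ antidiagonal (n + 1), abelCoeff x p.1 * ((-(x + p.1)) ^ p.2 / (p.2 ! : ℝ)) = 0 := by
  have hΔ := congrFun (fwdDiff_iter_pow_eq_zero_of_lt (R := ℝ) (Nat.lt_succ_self n)) x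
  rw [fwdDiff_iter_eq_sum_shift, Pi.zero_apply] at hΔ
  suffices h : ((n + 1) ! : ℝ) * ∑ p ∈ antidiagonal (n + 1),
      abelCoeff x p.1 * ((-(x + p.1)) ^ p.2 / (p.2 ! : ℝ)) = x * 0 by
    simpa [Nat.factorial_ne_zero] using h
  rw [← hΔ, mul_sum, mul_sum, Nat.sum_antidiagonal_eq_sum_range_succ_mk]
  refine sum_congr rfl fun k hk => ?_
  have hk : k ≤ n + 1 := Nat.lt_succ_iff.mp (mem_range.mp hk)
  have hfac := Nat.choose_mul_factorial_mul_factorial hk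
  have hterm := abelCoeff_mul_factorial_mul_pow x (Nat.add_sub_cancel' hk)
  simp only [Nat.succ_eq_add_one, zsmul_eq_mul, nsmul_eq_mul, mul_one, neg_pow (x + k)]
  rw [← hfac]
  push_cast
  field_simp
  linear_combination ((n + 1).choose k : ℝ) * hterm

lemma sum_antidiagonal_abelCoeff_mul_shiftedPowCoeff (x y : ℝ) (n : ℕ) :
    ∑ p ∈ antidiagonal n, abelCoeff x p.1 * shiftedPowCoeff y p.2 = shiftedPowCoeff (x + y) n := by
  induction n generalizing y with
  | zero => simp
  | succ n ih =>
    have hlhs : ∀ z, HasDerivAt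
        (fun y => ∑ p ∈ antidiagonal (n + 1), abelCoeff x p.1 * shiftedPowCoeff y p.2)
        (shiftedPowCoeff (x + z + 1) n) z := by
      intro z
      simp only [Nat.sum_antidiagonal_succ', shiftedPowCoeff_zero]
      have hsum := HasDerivAt.fun_sum (u := antidiagonal n) fun p _ =>
        (hasDerivAt_shiftedPowCoeff_succ z p.2).const_mul (abelCoeff x p.1)
      rw [ih, ← add_assoc] at hsum
      simpa using hsum.const_add (abelCoeff x (n + 1) * 1)
    have hrhs : ∀ z, HasDerivAt (fun y => shiftedPowCoeff (x + y) (n + 1))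
        (shiftedPowCoeff (x + z + 1) n) z :=
      fun z => (hasDerivAt_shiftedPowCoeff_succ (x + z) n).comp_const_add x z
    refine congrFun (eq_of_hasDerivAt_eq hlhs hrhs (-x - (n + 1 : ℕ)) ?_) y
    have hpoint : ∀ p ∈ antidiagonal (n + 1),
        abelCoeff x p.1 * shiftedPowCoeff (-x - (n + 1 : ℕ)) p.2
          = abelCoeff x p.1 * ((-(x + p.1)) ^ p.2 / (p.2 ! : ℝ)) := by
      intro p hp
      rw [shiftedPowCoeff, ← mem_antidiagonal.mp hp]
      push_cast
      ring_nf
    have hzero : x + (-x - ((n + 1 : ℕ) : ℝ)) + ((n + 1 : ℕ) : ℝ) = 0 := by ring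
    rw [sum_congr rfl hpoint, sum_antidiagonal_abelCoeff_mul_neg_pow, shiftedPowCoeff, hzero]
    simp

lemma sum_antidiagonal_abelCoeff_mul_abelCoeff (x y : ℝ) (n : ℕ) :
    ∑ p ∈ antidiagonal n, abelCoeff x p.1 * abelCoeff y p.2 = abelCoeff (x + y) n := by
  cases n with
  | zero => simp
  | succ n =>
    rw [Nat.sum_antidiagonal_succ', abelCoeff_succ_eq_sub (x + y),
      ← sum_antidiagonal_abelCoeff_mul_shiftedPowCoeff, Nat.sum_antidiagonal_succ', add_assoc,
      ← sum_antidiagonal_abelCoeff_mul_shiftedPowCoeff]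
    simp only [abelCoeff_succ_eq_sub y, mul_sub, sum_sub_distrib, abelCoeff_zero,
      shiftedPowCoeff_zero]
    ring

lemma abs_abelCoeff_le {α R : ℝ} (hR : |α| ≤ R) (n : ℕ) :
    |abelCoeff α n| ≤ (1 + R * exp R) * exp n := by
  have hR0 : 0 ≤ R := (abs_nonneg α).trans hR
  have hRexp : 0 ≤ R * exp R := by positivity
  cases n with
  | zero => simpa using hRexp
  | succ n =>
    set m : ℝ := ((n + 1 : ℕ) : ℝ)
    have hm : 1 ≤ m := by simp [m]
    have hbase : |α + m| ≤ m + R := by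
      have := abs_add_le α m
      rw [abs_of_nonneg (by linarith : 0 ≤ m)] at this
      linarith
    rw [abelCoeff_succ, abs_div, abs_mul, abs_pow, Nat.abs_cast]
    calc |α| * |α + m| ^ n / ((n + 1) ! : ℝ)
        ≤ R * ((m + R) ^ (n + 1) / ((n + 1) ! : ℝ)) := by
          rw [mul_div_assoc]
          gcongr
          exact (pow_le_pow_left₀ (abs_nonneg _) hbase n).trans
            (pow_le_pow_right₀ (by linarith) n.le_succ)
      _ ≤ R * exp (m + R) := by
          gcongr
          exact pow_div_factorial_le_exp _ (by linarith) _
      _ ≤ (1 + R * exp R) * exp m := by rw [exp_add]; nlinarith [exp_pos m]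

lemma continuous_abelCoeff (n : ℕ) : Continuous (abelCoeff · n) := by
  cases n with
  | zero => simp [continuous_const]
  | succ n => simp only [abelCoeff_succ]; fun_prop

noncomputable def abelSeries (y α : ℝ) : ℝ :=
  ∑' n, abelCoeff α n * y ^ n

section abelSeries

variable {y : ℝ}

lemma norm_abelCoeff_mul_pow_le {α R : ℝ} (hR : |α| ≤ R) (n : ℕ) :
    ‖abelCoeff α n * y ^ n‖ ≤ (1 + R * exp R) * (exp 1 * |y|) ^ n := by
  rw [norm_mul, norm_pow, Real.norm_eq_abs, Real.norm_eq_abs, mul_pow, exp_one_pow, ← mul_assoc]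
  gcongr
  exact abs_abelCoeff_le hR n

lemma summable_norm_abelCoeff_mul_pow (hy : exp 1 * |y| < 1) (α : ℝ) :
    Summable fun n => ‖abelCoeff α n * y ^ n‖ :=
  .of_nonneg_of_le (fun _ => norm_nonneg _) (norm_abelCoeff_mul_pow_le le_rfl)
    ((summable_geometric_of_lt_one (by positivity) hy).mul_left _)

lemma abelSeries_zero : abelSeries y 0 = 1 := by
  rw [abelSeries, tsum_eq_single 0 fun n hn => ?_]
  · simp
  · obtain ⟨n, rfl⟩ := Nat.exists_eq_succ_of_ne_zero hn
    simp [abelCoeff_succ]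

lemma abelSeries_add (hy : exp 1 * |y| < 1) (α β : ℝ) :
    abelSeries y (α + β) = abelSeries y α * abelSeries y β := by
  rw [abelSeries, abelSeries, abelSeries, tsum_mul_tsum_eq_tsum_sum_antidiagonal_of_summable_norm
    (summable_norm_abelCoeff_mul_pow hy α) (summable_norm_abelCoeff_mul_pow hy β)]
  refine tsum_congr fun n => ?_
  rw [← sum_antidiagonal_abelCoeff_mul_abelCoeff, sum_mul]
  refine sum_congr rfl fun p hp => ?_
  rw [← mem_antidiagonal.mp hp, pow_add]
  ring

lemma continuous_abelSeries (hy : exp 1 * |y| < 1) : Continuous (abelSeries y) := by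
  refine continuous_iff_continuousAt.mpr fun α₀ => ?_
  have hball : ContinuousOn (abelSeries y) (Metric.ball α₀ 1) := by
    refine continuousOn_tsum
      (fun n => ((continuous_abelCoeff n).mul continuous_const).continuousOn)
      ((summable_geometric_of_lt_one (by positivity) hy).mul_left _)
      fun n α hα => norm_abelCoeff_mul_pow_le (R := |α₀| + 1) ?_ n
    have := abs_sub_abs_le_abs_sub α α₀
    rw [Metric.mem_ball, Real.dist_eq] at hα
    linarith
  exact hball.continuousAt (Metric.ball_mem_nhds α₀ one_pos)

end abelSeries

lemma abelCoeff_one (n : ℕ) : abelCoeff 1 n = ((n + 1 : ℕ) : ℝ) ^ n / ((n + 1) ! : ℝ) := by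
  cases n with
  | zero => simp
  | succ n =>
    rw [abelCoeff_succ, Nat.factorial_succ (n + 1)]
    push_cast
    field_simp
    ring

lemma lambertW_div_self_eq_abelSeries {x : ℝ} (hx : x ≠ 0) :
    lambertW x / x = abelSeries (-x) 1 := by
  simp only [lambertW, abelSeries, abelCoeff_one, pow_succ, ← mul_assoc, tsum_mul_right]
  field_simp

/-- for every real `α` and `0 < |x| < 1/e`,
`(W(x)/x)^α = ∑_{n ≥ 0} (α (n+α)^{n-1} / n!) (-x)^n`.
The `n = 0` coefficient `α (0+α)^{-1} = α/α` is `1` (its value as a rational function of `α`). -/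
theorem lambertW_div_self_rpow (α x : ℝ) (hx0 : x ≠ 0) (hx : |x| < 1 / Real.exp 1) :
    (lambertW x / x) ^ α =
      ∑' n : ℕ,
        (if n = 0 then 1 else α * ((n : ℝ) + α) ^ (n - 1) / (Nat.factorial n : ℝ)) * (-x) ^ n := by
  have hy : exp 1 * |-x| < 1 := by
    rwa [abs_neg, ← lt_div_iff₀' (exp_pos 1)]
  rw [lambertW_div_self_eq_abelSeries hx0, ← eq_rpow_of_continuous_of_map_add_eq_mul
    (continuous_abelSeries hy) abelSeries_zero (abelSeries_add hy)]
  rfl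
end

section
/- The series y(x) = ∑_{n≥0} ((rn+1)^{n-1}/n!) x^{rn+1} satisfies y(x) = (W(-r x^r)/(-r))^{1/r} for small |x|; equivalently x = y e^{-y^r}. -/
/-- The series `y(x) = ∑_{n ≥ 0} ((rn+1)^{n-1}/n!) x^{rn+1}`.
(For `n = 0` the coefficient is `1^{-1} = 1 = (r·0+1)^{0}`, so natural subtraction is correct.) -/
noncomputable def ySpin (r : ℕ) (x : ℝ) : ℝ :=
  ∑' n : ℕ, (((r * n + 1 : ℕ) : ℝ) ^ (n - 1) / (Nat.factorial n : ℝ)) * x ^ (r * n + 1)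

/-!
`ySpin r` inverts `t ↦ t * exp (-t ^ r)` near `0` (Lagrange inversion). Substituting
`x = t e^{-t^r}` and expanding each `exp (-(r n + 1) t^r)` gives an absolutely convergent double
series; its terms with `n + k = m` add up to `t^{rm+1}/m!` times the `m`-th finite difference
`∑ (-1)^k C(m,n) (rn+1)^{m-1}` of a polynomial of degree `m - 1`, which vanishes for `m ≥ 1`.
Hence `ySpin r (t e^{-t^r}) = t`. For `r = 1` this is `W(z e^z) = z`, because
`W(-w) = -ySpin 1 w`; taking `z = -r t^r` gives `W(-r x^r) = -r t^r`.
-/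

open Finset Real
open scoped Nat

theorem sum_antidiagonal_neg_one_pow_mul_choose_mul_pow_eq_zero {R : Type*} [CommRing R]
    (a b : R) {d m : ℕ} (h : d < m) :
    ∑ p ∈ antidiagonal m, (-1) ^ p.2 * (m.choose p.1 : R) * (a * p.1 + b) ^ d = 0 := by
  open Polynomial in
  have hdeg : ((C a * X + C b) ^ d).natDegree < m := by
    refine lt_of_le_of_lt (natDegree_pow_le_of_le d natDegree_linear_le) ?_
    simpa using h
  have := congrFun (Polynomial.fwdDiff_iter_eq_zero_of_degree_lt hdeg) 0
  rw [fwdDiff_iter_eq_sum_shift] at this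
  rw [Finset.Nat.sum_antidiagonal_eq_sum_range_succ_mk]
  simpa [zsmul_eq_mul] using this

theorem Summable.tsum_eq_tsum_sum_antidiagonal {A α : Type*} [AddCommMonoid A]
    [HasAntidiagonal A] [TopologicalSpace α] [AddCommMonoid α] [T3Space α] [ContinuousAdd α]
    {f : A × A → α} (hf : Summable f) : ∑' p, f p = ∑' n, ∑ p ∈ antidiagonal n, f p := by
  have := (HasAntidiagonal.sigmaAntidiagonalEquivProd.hasSum_iff.mpr hf.hasSum).sigma
    fun n => hasSum_fintype _
  exact this.tsum_eq.symm.trans (tsum_congr fun n => Finset.sum_coe_sort _ _)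

noncomputable def ySpinCoeff (r n : ℕ) : ℝ :=
  ((r * n + 1 : ℕ) : ℝ) ^ (n - 1) / (n ! : ℝ)

theorem ySpin_eq_tsum (r : ℕ) (x : ℝ) : ySpin r x = ∑' n, ySpinCoeff r n * x ^ (r * n + 1) := rfl

theorem ySpinCoeff_nonneg (r n : ℕ) : 0 ≤ ySpinCoeff r n := by
  unfold ySpinCoeff; positivity

theorem ySpinCoeff_le_exp (r n : ℕ) : ySpinCoeff r n ≤ exp (r * n + 1) := by
  have hbase : (1 : ℝ) ≤ ((r * n + 1 : ℕ) : ℝ) := by exact_mod_cast Nat.le_add_left 1 (r * n)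
  calc ySpinCoeff r n ≤ ((r * n + 1 : ℕ) : ℝ) ^ n / (n ! : ℝ) := by
        unfold ySpinCoeff; gcongr; exact n.sub_le 1
    _ ≤ exp (r * n + 1) := by
        simpa using Real.pow_div_factorial_le_exp ((r * n + 1 : ℕ) : ℝ) (by positivity) n

theorem summable_ySpinCoeff_mul_pow {r : ℕ} (hr : 0 < r) {s : ℝ} (hs0 : 0 ≤ s)
    (hs : exp 1 * s < 1) : Summable fun n => ySpinCoeff r n * s ^ (r * n + 1) := by
  have hq : (exp 1 * s) ^ r < 1 := pow_lt_one₀ (by positivity) hs hr.ne'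
  refine Summable.of_nonneg_of_le (fun n => by have := ySpinCoeff_nonneg r n; positivity)
    (fun n => ?_) ((summable_geometric_of_lt_one (by positivity) hq).mul_left (exp 1 * s))
  calc ySpinCoeff r n * s ^ (r * n + 1) ≤ exp (r * n + 1) * s ^ (r * n + 1) := by
        gcongr; exact ySpinCoeff_le_exp r n
    _ = (exp 1 * s) ^ (r * n + 1) := by rw [mul_pow, ← exp_nat_mul]; push_cast; ring_nf
    _ = exp 1 * s * ((exp 1 * s) ^ r) ^ n := by rw [← pow_mul, pow_succ']

/-- The `(n, k)` term of the double series obtained from `ySpin r (t * exp u)` by expanding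
`exp ((r n + 1) u)`. -/
noncomputable def ySpinMulExpTerm (r : ℕ) (t u : ℝ) (p : ℕ × ℕ) : ℝ :=
  ySpinCoeff r p.1 * t ^ (r * p.1 + 1) * ((((r * p.1 + 1 : ℕ) : ℝ) * u) ^ p.2 / (p.2 ! : ℝ))

theorem hasSum_ySpinMulExpTerm (r n : ℕ) (t u : ℝ) :
    HasSum (fun k => ySpinMulExpTerm r t u (n, k))
      (ySpinCoeff r n * (t * exp u) ^ (r * n + 1)) := by
  have := (NormedSpace.expSeries_div_hasSum_exp (((r * n + 1 : ℕ) : ℝ) * u)).mul_left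
    (ySpinCoeff r n * t ^ (r * n + 1))
  rw [← Real.exp_eq_exp_ℝ] at this
  rwa [mul_pow, ← exp_nat_mul, ← mul_assoc]

theorem ySpinMulExpTerm_nonneg (r : ℕ) {t u : ℝ} (ht : 0 ≤ t) (hu : 0 ≤ u) (p : ℕ × ℕ) :
    0 ≤ ySpinMulExpTerm r t u p := by
  have := ySpinCoeff_nonneg r p.1
  unfold ySpinMulExpTerm; positivity

theorem abs_ySpinMulExpTerm (r : ℕ) (t u : ℝ) (p : ℕ × ℕ) :
    |ySpinMulExpTerm r t u p| = ySpinMulExpTerm r |t| |u| p := by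
  simp only [ySpinMulExpTerm, abs_mul, abs_div, abs_pow, Nat.abs_cast,
    abs_of_nonneg (ySpinCoeff_nonneg r p.1)]

theorem summable_ySpinMulExpTerm {r : ℕ} (hr : 0 < r) {t u : ℝ}
    (h : exp 1 * (|t| * exp |u|) < 1) : Summable (ySpinMulExpTerm r t u) := by
  rw [← summable_abs_iff]
  simp_rw [abs_ySpinMulExpTerm]
  refine (summable_prod_of_nonneg (ySpinMulExpTerm_nonneg r (abs_nonneg t) (abs_nonneg u))).2
    ⟨fun n => (hasSum_ySpinMulExpTerm r n _ _).summable, ?_⟩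
  simp_rw [(hasSum_ySpinMulExpTerm r _ _ _).tsum_eq]
  exact summable_ySpinCoeff_mul_pow hr (by positivity) h

theorem ySpin_mul_exp_eq_tsum_sum_antidiagonal {r : ℕ} (hr : 0 < r) {t u : ℝ}
    (h : exp 1 * (|t| * exp |u|) < 1) :
    ySpin r (t * exp u) = ∑' m, ∑ p ∈ antidiagonal m, ySpinMulExpTerm r t u p := by
  have hsum := summable_ySpinMulExpTerm hr h
  rw [← hsum.tsum_eq_tsum_sum_antidiagonal, hsum.tsum_prod, ySpin_eq_tsum]
  exact tsum_congr fun n => (hasSum_ySpinMulExpTerm r n t u).tsum_eq.symm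

theorem ySpinMulExpTerm_neg_pow (r n k : ℕ) (t : ℝ) :
    ySpinMulExpTerm r t (-t ^ r) (n, k) = t ^ (r * (n + k) + 1) / ((n + k) ! : ℝ) *
      ((-1) ^ k * ((n + k).choose n : ℝ) * (r * n + 1 : ℝ) ^ (n + k - 1)) := by
  have hpow : ((r * n + 1 : ℕ) : ℝ) ^ (n - 1) * ((r * n + 1 : ℕ) : ℝ) ^ k
      = (r * n + 1 : ℝ) ^ (n + k - 1) := by
    rcases n with _ | n
    · simp
    · rw [← pow_add]; push_cast; congr 1; omega
  rw [Nat.cast_add_choose]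
  simp only [ySpinMulExpTerm, ySpinCoeff]
  field_simp
  rw [← hpow]
  ring

theorem sum_antidiagonal_ySpinMulExpTerm_neg_pow {m : ℕ} (hm : m ≠ 0) (r : ℕ) (t : ℝ) :
    ∑ p ∈ antidiagonal m, ySpinMulExpTerm r t (-t ^ r) p = 0 := by
  have hterm : ∀ p ∈ antidiagonal m, ySpinMulExpTerm r t (-t ^ r) p =
      t ^ (r * m + 1) / (m ! : ℝ) *
        ((-1) ^ p.2 * (m.choose p.1 : ℝ) * (r * p.1 + 1 : ℝ) ^ (m - 1)) := by
    rintro ⟨n, k⟩ hnk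
    rw [HasAntidiagonal.mem_antidiagonal] at hnk
    subst hnk
    exact ySpinMulExpTerm_neg_pow r n k t
  rw [sum_congr rfl hterm, ← mul_sum,
    sum_antidiagonal_neg_one_pow_mul_choose_mul_pow_eq_zero _ _ (by omega), mul_zero]

theorem ySpin_mul_exp_neg_pow {r : ℕ} (hr : 0 < r) {t : ℝ} (ht : |t| < exp (-2)) :
    ySpin r (t * exp (-t ^ r)) = t := by
  have ht1 : |t| ≤ 1 := ht.le.trans (exp_le_one_iff.2 (by norm_num))
  have hconv : exp 1 * (|t| * exp |-t ^ r|) < 1 := by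
    calc exp 1 * (|t| * exp |-t ^ r|) ≤ exp 1 * (|t| * exp 1) := by
          rw [abs_neg, abs_pow]; gcongr; exact pow_le_one₀ (abs_nonneg t) ht1
      _ = exp 2 * |t| := by rw [show (2 : ℝ) = 1 + 1 by norm_num, exp_add]; ring
      _ < exp 2 * exp (-2) := by gcongr
      _ = 1 := by rw [← exp_add]; norm_num
  rw [ySpin_mul_exp_eq_tsum_sum_antidiagonal hr hconv,
    tsum_eq_single 0 fun m hm => sum_antidiagonal_ySpinMulExpTerm_neg_pow hm r t]
  simp [ySpinMulExpTerm, ySpinCoeff]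

theorem lambertW_neg (w : ℝ) : lambertW (-w) = -ySpin 1 w := by
  rw [lambertW, ySpin, neg_neg]
  congr 1
  refine tsum_congr fun n => ?_
  rcases n with _ | n
  · simp
  · rw [pow_succ', Nat.factorial_succ, Nat.cast_mul, mul_div_mul_left _ _ (by positivity)]
    simp

theorem lambertW_mul_exp_self {z : ℝ} (hz : |z| < exp (-2)) : lambertW (z * exp z) = z := by
  have := ySpin_mul_exp_neg_pow one_pos (t := -z) (by rwa [abs_neg])
  rw [pow_one, neg_neg] at this
  rw [show z * exp z = -(-z * exp z) by ring, lambertW_neg, this, neg_neg]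

theorem exists_mem_Icc_mul_exp_neg_pow_eq {r : ℕ} (hr : 0 < r) {δ x : ℝ} (hδ : 0 ≤ δ)
    (hx0 : 0 ≤ x) (hx : x ≤ δ * exp (-δ ^ r)) : ∃ t ∈ Set.Icc 0 δ, t * exp (-t ^ r) = x :=
  intermediate_value_Icc hδ (by fun_prop) ⟨by simpa [hr.ne'] using hx0, hx⟩

/-- for small `|x|` (here small nonnegative `x`, where the real power `(·)^{1/r}`
is defined), `y(x) = (W(-r x^r)/(-r))^{1/r}`; equivalently `x = y e^{-y^r}`. -/
theorem spectral_curve_r_spin (r : ℕ) (hr : 0 < r) :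
    ∃ ε > (0 : ℝ), ∀ x : ℝ, 0 ≤ x → x < ε →
      ySpin r x = (lambertW (-(r : ℝ) * x ^ r) / (-(r : ℝ))) ^ ((r : ℝ)⁻¹) ∧
        x = ySpin r x * Real.exp (-(ySpin r x) ^ r) := by
  set δ := exp (-2) / (r + 1)
  have hδ0 : 0 < δ := by positivity
  have hrδ : r * δ < exp (-2) := by
    rw [mul_div_assoc', div_lt_iff₀ (by positivity)]; nlinarith [exp_pos (-2)]
  have hδ : δ < exp (-2) := (le_mul_of_one_le_left hδ0.le (Nat.one_le_cast.2 hr)).trans_lt hrδ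
  refine ⟨δ * exp (-δ ^ r), by positivity, fun x hx0 hxε => ?_⟩
  obtain ⟨t, ⟨ht0, htδ⟩, rfl⟩ := exists_mem_Icc_mul_exp_neg_pow_eq hr hδ0.le hx0 hxε.le
  have hrR : (0 : ℝ) < r := by exact_mod_cast hr
  have ht : t < exp (-2) := htδ.trans_lt hδ
  rw [ySpin_mul_exp_neg_pow hr (by rwa [abs_of_nonneg ht0])]
  refine ⟨?_, rfl⟩
  have hW : lambertW (-r * (t * exp (-t ^ r)) ^ r) = -r * t ^ r := by
    rw [mul_pow, ← exp_nat_mul, mul_neg, ← neg_mul, ← mul_assoc]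
    refine lambertW_mul_exp_self ?_
    have ht1 : t ≤ 1 := ht.le.trans (exp_le_one_iff.2 (by norm_num))
    calc |-r * t ^ r| = r * t ^ r := by rw [neg_mul, abs_neg, abs_of_nonneg (by positivity)]
      _ ≤ r * δ := by gcongr; exact (pow_le_of_le_one ht0 ht1 hr.ne').trans htδ
      _ < exp (-2) := hrδ
  rw [hW, neg_mul, neg_div_neg_eq, mul_div_cancel_left₀ _ hrR.ne', pow_rpow_inv_natCast ht0 hr.ne']
end

section
/- Let Z(x) = ∑_{d≥0} (x^d/(λ^d d!)) exp(λ^r((d-1/2)^{r+1} - (-1/2)^{r+1})/(r+1)). Then (λ x d/dx - A) Z = 0, where A = x^{3/2} exp((1/(r+1)) x^{-1}∑_{i=0}^r (λ x d/dx)^i x (λ x d/dx)^{r-i}) x^{-1/2}. -/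
open PowerSeries

/-! The exponent of the `d`-th coefficient of `Z` telescopes, so the coefficients `z_d` obey
`λ (d + 1) z_{d+1} = exp((λ^r/(r+1))((d+1/2)^{r+1} - (d-1/2)^{r+1})) z_d`, which is
`λ x d/dx Z = A Z` read off coefficientwise. -/

/-- The principal specialization of the `r`-spin Hurwitz partition function, as a formal power
series: `Z = ∑_{d ≥ 0} (x^d/(λ^d d!)) exp(λ^r((d-1/2)^{r+1} - (-1/2)^{r+1})/(r+1))`. -/
noncomputable def Zspin (r : ℕ) (l : ℝ) : PowerSeries ℝ :=
  PowerSeries.mk fun d =>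
    1 / (l ^ d * (Nat.factorial d : ℝ)) *
      Real.exp (l ^ r * (((d : ℝ) - 1 / 2) ^ (r + 1) - (-(1 / 2) : ℝ) ^ (r + 1)) / ((r : ℝ) + 1))

/-- The operator `A = x^{3/2} exp((1/(r+1)) x^{-1} ∑_{i=0}^r (λ x d/dx)^i x (λ x d/dx)^{r-i}) x^{-1/2}`,
acting on `x^n` by `A x^n = exp((λ^r/(r+1))((n+1/2)^{r+1} - (n-1/2)^{r+1})) x^{n+1}`. -/
noncomputable def opA (r : ℕ) (l : ℝ) (f : PowerSeries ℝ) : PowerSeries ℝ :=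
  PowerSeries.mk fun n =>
    match n with
    | 0 => 0
    | m + 1 =>
      Real.exp (l ^ r / ((r : ℝ) + 1) *
          (((m : ℝ) + 1 / 2) ^ (r + 1) - ((m : ℝ) - 1 / 2) ^ (r + 1))) *
        PowerSeries.coeff m f

/-- The operator `λ x d/dx`, acting on `x^n` by multiplication by `λn`. -/
noncomputable def xDx (l : ℝ) (f : PowerSeries ℝ) : PowerSeries ℝ :=
  PowerSeries.mk fun n => l * (n : ℝ) * PowerSeries.coeff n f

theorem coeff_xDx (l : ℝ) (f : PowerSeries ℝ) (n : ℕ) :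
    coeff n (xDx l f) = l * n * coeff n f :=
  coeff_mk _ _

theorem coeff_zero_opA (r : ℕ) (l : ℝ) (f : PowerSeries ℝ) : coeff 0 (opA r l f) = 0 :=
  coeff_mk _ _

theorem coeff_succ_opA (r : ℕ) (l : ℝ) (f : PowerSeries ℝ) (m : ℕ) :
    coeff (m + 1) (opA r l f) =
      Real.exp (l ^ r / ((r : ℝ) + 1) *
        (((m : ℝ) + 1 / 2) ^ (r + 1) - ((m : ℝ) - 1 / 2) ^ (r + 1))) * coeff m f :=
  coeff_mk _ _

theorem spin_exponent_succ (r m : ℕ) (l c : ℝ) :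
    l ^ r * ((((m + 1 : ℕ) : ℝ) - 1 / 2) ^ (r + 1) - c) / ((r : ℝ) + 1) =
      l ^ r / ((r : ℝ) + 1) * (((m : ℝ) + 1 / 2) ^ (r + 1) - ((m : ℝ) - 1 / 2) ^ (r + 1)) +
        l ^ r * (((m : ℝ) - 1 / 2) ^ (r + 1) - c) / ((r : ℝ) + 1) := by
  push_cast
  ring

theorem coeff_succ_Zspin (r : ℕ) {l : ℝ} (hl : l ≠ 0) (m : ℕ) :
    l * ((m + 1 : ℕ) : ℝ) * coeff (m + 1) (Zspin r l) =
      Real.exp (l ^ r / ((r : ℝ) + 1) *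
        (((m : ℝ) + 1 / 2) ^ (r + 1) - ((m : ℝ) - 1 / 2) ^ (r + 1))) * coeff m (Zspin r l) := by
  simp only [Zspin, coeff_mk]
  rw [spin_exponent_succ, Real.exp_add, Nat.factorial_succ]
  have hm : ((m : ℝ) + 1) ≠ 0 := by positivity
  have hfac : (m.factorial : ℝ) ≠ 0 := Nat.cast_ne_zero.mpr m.factorial_ne_zero
  push_cast
  field_simp
  ring

theorem r_spin_quantum_curve_annihilates_general (r : ℕ) (l : ℝ) (hl : l ≠ 0) :
    xDx l (Zspin r l) - opA r l (Zspin r l) = 0 := by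
  ext n
  rw [map_sub, map_zero, sub_eq_zero, coeff_xDx]
  cases n with
  | zero => simp [coeff_zero_opA]
  | succ m => rw [coeff_succ_Zspin r hl, coeff_succ_opA]

/-- `(λ x d/dx - A) Z = 0`. -/
theorem r_spin_quantum_curve_annihilates (r : ℕ) (hr : 0 < r) (l : ℝ) (hl : l ≠ 0) :
    xDx l (Zspin r l) - opA r l (Zspin r l) = 0 :=
  r_spin_quantum_curve_annihilates_general r l hl
end
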